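/- Let Q be a rack and N a subgroup of Dis(Q) that is normal in LMlt(Q). Then the relation con_N = {(a,b) : L_a L_b^{-1} ∈ N} is a congruence of Q. -/

import Mathlib

/-!
Work in the group `LMlt(Q)` modulo its normal subgroup `N`: the relation `x y⁻¹ ∈ N` is compatible
with products and inverses of elements of `LMlt(Q)`, hence with conjugation. Self-distributivity
says exactly that `L (a * c) = L_a L_c L_a⁻¹` and `L (a \ c) = L_a⁻¹ L_c L_a`, so `con_N` is
compatible with both operations.
-/

structure LeftQuasigroup (Q : Type*) where
  op : Q → Q → Q
  dv : Q → Q → Q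
  dv_op : ∀ x y, dv x (op x y) = y
  op_dv : ∀ x y, op x (dv x y) = y

namespace LeftQuasigroup

variable {Q : Type*} (S : LeftQuasigroup Q)

/-- The left translation by `a`, as a permutation of `Q`. -/
def L (a : Q) : Equiv.Perm Q :=
  ⟨S.op a, S.dv a, S.dv_op a, S.op_dv a⟩

/-- The left multiplication group. -/
def LMlt : Subgroup (Equiv.Perm Q) :=
  Subgroup.closure (Set.range S.L)

/-- The displacement group. -/
def Dis : Subgroup (Equiv.Perm Q) :=
  Subgroup.closure { f | ∃ a b, f = S.L a * (S.L b)⁻¹ }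

/-- `α` is a congruence of the left quasigroup. -/
def IsCongruence (α : Q → Q → Prop) : Prop :=
  Equivalence α ∧
  (∀ a b c d, α a b → α c d → α (S.op a c) (S.op b d)) ∧
  (∀ a b c d, α a b → α c d → α (S.dv a c) (S.dv b d))

/-- The displacement group relative to `α`: the smallest normal subgroup of
`LMlt` containing all `L a * (L b)⁻¹` with `α a b`, given explicitly as the
subgroup generated by the `LMlt`-conjugates of such elements. -/
def DisRel (α : Q → Q → Prop) : Subgroup (Equiv.Perm Q) :=
  Subgroup.closure
    { f | ∃ g ∈ S.LMlt, ∃ a b, α a b ∧ f = g * (S.L a * (S.L b)⁻¹) * g⁻¹ }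

/-- The set `Dis^α = {h ∈ Dis(Q) : h(a) α a for all a}`. -/
def DisUpSet (α : Q → Q → Prop) : Set (Equiv.Perm Q) :=
  { h | h ∈ S.Dis ∧ ∀ a, α (h a) a }

/-- Left self-distributivity, making a left quasigroup a rack. -/
def IsRack : Prop :=
  ∀ x y z, S.op x (S.op y z) = S.op (S.op x y) (S.op x z)

end LeftQuasigroup

open LeftQuasigroup

section NormalizedSubgroup

variable {G : Type*} [Group G]

theorem equivalence_mul_inv_mem (N : Subgroup G) :
    Equivalence (fun x y : G => x * y⁻¹ ∈ N) where
  refl x := by simp only [mul_inv_cancel, one_mem]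
  symm {x y} h := by simpa only [mul_inv_rev, inv_inv] using inv_mem h
  trans {x y z} hxy hyz := by simpa only [mul_assoc, inv_mul_cancel_left] using mul_mem hxy hyz

variable {M N : Subgroup G} (hN : ∀ g ∈ M, ∀ n ∈ N, g * n * g⁻¹ ∈ N)
include hN

theorem mul_mul_inv_mem_of_conj_mem {x y u v : G} (hx : x ∈ M) (hxy : x * y⁻¹ ∈ N)
    (huv : u * v⁻¹ ∈ N) : x * u * (y * v)⁻¹ ∈ N := by
  have h : x * u * (y * v)⁻¹ = x * (u * v⁻¹) * x⁻¹ * (x * y⁻¹) := by group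
  rw [h]
  exact mul_mem (hN x hx _ huv) hxy

theorem inv_mul_inv_inv_mem_of_conj_mem {x y : G} (hx : x ∈ M) (hxy : x * y⁻¹ ∈ N) :
    x⁻¹ * y⁻¹⁻¹ ∈ N := by
  have h : x⁻¹ * y⁻¹⁻¹ = x⁻¹ * (x * y⁻¹)⁻¹ * x⁻¹⁻¹ := by group
  rw [h]
  exact hN _ (inv_mem hx) _ (inv_mem hxy)

theorem conj_mul_inv_conj_mem_of_conj_mem {x y u v : G} (hx : x ∈ M) (hu : u ∈ M)
    (hxy : x * y⁻¹ ∈ N) (huv : u * v⁻¹ ∈ N) : x * u * x⁻¹ * (y * v * y⁻¹)⁻¹ ∈ N :=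
  mul_mul_inv_mem_of_conj_mem hN (mul_mem hx hu) (mul_mul_inv_mem_of_conj_mem hN hx hxy huv)
    (inv_mul_inv_inv_mem_of_conj_mem hN hx hxy)

end NormalizedSubgroup

namespace LeftQuasigroup

variable {Q : Type*} {S : LeftQuasigroup Q}

theorem L_mem_LMlt (a : Q) : S.L a ∈ S.LMlt :=
  Subgroup.subset_closure ⟨a, rfl⟩

theorem IsRack.L_op (hS : S.IsRack) (a c : Q) :
    S.L (S.op a c) = S.L a * S.L c * (S.L a)⁻¹ := by
  ext z
  change S.op (S.op a c) z = S.op a (S.op c (S.dv a z))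
  rw [hS a c (S.dv a z), S.op_dv]

theorem IsRack.L_dv (hS : S.IsRack) (a c : Q) :
    S.L (S.dv a c) = (S.L a)⁻¹ * S.L c * (S.L a)⁻¹⁻¹ := by
  have h := hS.L_op a (S.dv a c)
  rw [S.op_dv] at h
  rw [h]
  group

end LeftQuasigroup

theorem stmt_11_general {Q : Type*} (S : LeftQuasigroup Q) (hSD : S.IsRack)
    (N : Subgroup (Equiv.Perm Q))
    (hN2 : ∀ g ∈ S.LMlt, ∀ n ∈ N, g * n * g⁻¹ ∈ N) :
    S.IsCongruence (fun a b => S.L a * (S.L b)⁻¹ ∈ N) := by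
  refine ⟨(equivalence_mul_inv_mem N).comap S.L, ?_, ?_⟩
  · intro a b c d hab hcd
    rw [hSD.L_op, hSD.L_op]
    exact conj_mul_inv_conj_mem_of_conj_mem hN2 (L_mem_LMlt a) (L_mem_LMlt c) hab hcd
  · intro a b c d hab hcd
    rw [hSD.L_dv, hSD.L_dv]
    exact conj_mul_inv_conj_mem_of_conj_mem hN2 (inv_mem (L_mem_LMlt a)) (L_mem_LMlt c)
      (inv_mul_inv_inv_mem_of_conj_mem hN2 (L_mem_LMlt a) hab) hcd

/-- For a rack `Q` and `N ≤ Dis(Q)` normal in `LMlt(Q)`, the relation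
`con_N = {(a,b) : L_a L_b⁻¹ ∈ N}` is a congruence of `Q`. -/
theorem stmt_11 {Q : Type*} (S : LeftQuasigroup Q) (hSD : S.IsRack)
    (N : Subgroup (Equiv.Perm Q)) (hN1 : N ≤ S.Dis)
    (hN2 : ∀ g ∈ S.LMlt, ∀ n ∈ N, g * n * g⁻¹ ∈ N) :
    S.IsCongruence (fun a b => S.L a * (S.L b)⁻¹ ∈ N) :=
  stmt_11_general S hSD N hN2
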